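/- The block circulant operator intertwines generalized tensor and generalized matrix functions: for any A ∈ C^{m×n×p} and odd scalar function f, f^◇(bcirc(A)) = bcirc(f^◇(A)), where on the left f^◇ is the generalized matrix function (defined via the matrix SVD) applied to the mp×np matrix bcirc(A). -/

import Mathlib

open Matrix Kronecker
open scoped ComplexOrder

namespace TProd

/-- A third-order tensor with `p` frontal slices, each a matrix indexed by `ι × κ`. -/
abbrev Tensor (ι κ : Type) (p : ℕ) := Fin p → Matrix ι κ ℂ

variable {p : ℕ} [NeZero p]

/-- Block circulant matrix of a tensor: block `(i,j)` is the frontal slice `A (i - j)`. -/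
def bcirc {ι κ : Type} (A : Tensor ι κ p) : Matrix (Fin p × ι) (Fin p × κ) ℂ :=
  Matrix.of fun ik jl => A (ik.1 - jl.1) ik.2 jl.2

/-- Stack the frontal slices vertically. -/
def tunfold {ι κ : Type} (A : Tensor ι κ p) : Matrix (Fin p × ι) κ ℂ :=
  Matrix.of fun ik j => A ik.1 ik.2 j

/-- Inverse of `tunfold`. -/
def tfold {ι κ : Type} (M : Matrix (Fin p × ι) κ ℂ) : Tensor ι κ p :=
  fun k => Matrix.of fun a b => M (k, a) b

/-- The T-product `A * B := fold (bcirc A · unfold B)`. -/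
noncomputable def tprod {ι κ μ : Type} [Fintype κ] (A : Tensor ι κ p) (B : Tensor κ μ p) :
    Tensor ι μ p :=
  tfold (bcirc A * tunfold B)

/-- Tensor conjugate transpose: conjugate-transpose each slice and reverse slices 2..p. -/
def tconjT {ι κ : Type} (A : Tensor ι κ p) : Tensor κ ι p := fun k => (A (-k))ᴴ

/-- Tensor transpose: transpose each slice and reverse slices 2..p. -/
def ttransp {ι κ : Type} (A : Tensor ι κ p) : Tensor κ ι p := fun k => (A (-k))ᵀ

/-- The identity tensor: identity first frontal slice, other slices zero. -/
def tid (ι : Type) [DecidableEq ι] (p : ℕ) [NeZero p] : Tensor ι ι p :=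
  fun k => if k = 0 then 1 else 0

/-- Left inverse of `bcirc`: extract the first block column. -/
def bcircInv {ι κ : Type} (M : Matrix (Fin p × ι) (Fin p × κ) ℂ) : Tensor ι κ p :=
  fun k => Matrix.of fun a b => M (k, a) ((0 : Fin p), b)

/-- The unitary discrete Fourier matrix of size `p`. -/
noncomputable def Fmat (p : ℕ) : Matrix (Fin p) (Fin p) ℂ :=
  Matrix.of fun j k =>
    Complex.exp (-(2 * Real.pi * Complex.I * (j : ℕ) * (k : ℕ)) / p) / (Real.sqrt p : ℂ)

/-- Fourier-domain block diagonalization `(F_pᴴ ⊗ I) · bcirc A · (F_p ⊗ I)`. -/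
noncomputable def fblocks {ι κ : Type} [Fintype ι] [Fintype κ] [DecidableEq ι] [DecidableEq κ]
    (A : Tensor ι κ p) : Matrix (Fin p × ι) (Fin p × κ) ℂ :=
  ((Fmat p)ᴴ ⊗ₖ (1 : Matrix ι ι ℂ)) * bcirc A * (Fmat p ⊗ₖ (1 : Matrix κ κ ℂ))

/-- `S` is F-diagonal: Fourier blocks are (generalized) diagonal with nonnegative real
entries. -/
def IsFDiag {ι κ : Type} [Fintype ι] [Fintype κ] [DecidableEq ι] [DecidableEq κ]
    (S : Tensor ι κ p) : Prop :=
  (∀ i j a b, fblocks S (i, a) (j, b) ≠ 0 → i = j) ∧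
  (∀ x y y', fblocks S x y ≠ 0 → fblocks S x y' ≠ 0 → y = y') ∧
  (∀ x x' y, fblocks S x y ≠ 0 → fblocks S x' y ≠ 0 → x = x') ∧
  (∀ x y, 0 ≤ (fblocks S x y).re ∧ (fblocks S x y).im = 0)

/-- A tensor `Q` is unitary for the T-product. -/
def IsTUnitary {ι : Type} [Fintype ι] [DecidableEq ι] (Q : Tensor ι ι p) : Prop :=
  tprod (tconjT Q) Q = tid ι p ∧ tprod Q (tconjT Q) = tid ι p

/-- `(U, S, V)` is a T-SVD of `A`. -/
def IsTSVD {ι κ : Type} [Fintype ι] [Fintype κ] [DecidableEq ι] [DecidableEq κ]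
    (A : Tensor ι κ p) (U : Tensor ι ι p) (S : Tensor ι κ p) (V : Tensor κ κ p) : Prop :=
  IsTUnitary U ∧ IsTUnitary V ∧ IsFDiag S ∧ A = tprod U (tprod S (tconjT V))

/-- Apply a scalar function to the singular values of an F-diagonal tensor. -/
noncomputable def fhat {ι κ : Type} [Fintype ι] [Fintype κ] [DecidableEq ι] [DecidableEq κ]
    (f : ℂ → ℂ) (S : Tensor ι κ p) : Tensor ι κ p :=
  bcircInv ((Fmat p ⊗ₖ (1 : Matrix ι ι ℂ)) * (fblocks S).map f *
    ((Fmat p)ᴴ ⊗ₖ (1 : Matrix κ κ ℂ)))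

open Classical in
/-- The generalized tensor function induced by the scalar function `f` via the T-SVD. -/
noncomputable def gtf {ι κ : Type} [Fintype ι] [Fintype κ] [DecidableEq ι] [DecidableEq κ]
    (f : ℂ → ℂ) (A : Tensor ι κ p) : Tensor ι κ p :=
  if h : ∃ t : Tensor ι ι p × Tensor ι κ p × Tensor κ κ p, IsTSVD A t.1 t.2.1 t.2.2 then
    tprod h.choose.1 (tprod (fhat f h.choose.2.1) (tconjT h.choose.2.2))
  else 0

/-- An odd scalar function. -/
def OddFn (f : ℂ → ℂ) : Prop := ∀ z, f (-z) = -f z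

open Classical in
/-- The Moore–Penrose inverse of a matrix. -/
noncomputable def mpinv {ι κ : Type} [Fintype ι] [Fintype κ] (M : Matrix ι κ ℂ) :
    Matrix κ ι ℂ :=
  if h : ∃ N : Matrix κ ι ℂ,
      M * N * M = M ∧ N * M * N = N ∧ (M * N)ᴴ = M * N ∧ (N * M)ᴴ = N * M then
    h.choose
  else 0

/-- The Moore–Penrose inverse of a tensor: `A^† := bcirc⁻¹ ((bcirc A)^†)`. -/
noncomputable def tpinv {ι κ : Type} [Fintype ι] [Fintype κ] (A : Tensor ι κ p) :
    Tensor κ ι p :=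
  bcircInv (mpinv (bcirc A))

open Classical in
/-- Matrix function of a Hermitian matrix via the spectral theorem. -/
noncomputable def hermFun {ι : Type} [Fintype ι] [DecidableEq ι] (f : ℂ → ℂ)
    (M : Matrix ι ι ℂ) : Matrix ι ι ℂ :=
  if h : M.IsHermitian then
    (h.eigenvectorUnitary : Matrix ι ι ℂ) *
      Matrix.diagonal (fun i => f ((h.eigenvalues i : ℝ) : ℂ)) *
      (h.eigenvectorUnitary : Matrix ι ι ℂ)ᴴ
  else 0

open Classical in
/-- Square root of a positive semidefinite matrix. -/
noncomputable def msqrt {ι : Type} [Fintype ι] [DecidableEq ι] (M : Matrix ι ι ℂ) :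
    Matrix ι ι ℂ :=
  if h : M.PosSemidef then
    (h.1.eigenvectorUnitary : Matrix ι ι ℂ) *
      Matrix.diagonal (fun i => ((Real.sqrt (h.1.eigenvalues i) : ℝ) : ℂ)) *
      (star (h.1.eigenvectorUnitary : Matrix ι ι ℂ))
  else 0

/-- The standard tensor T-function (here used on Hermitian tensors). -/
noncomputable def stdTf {ι : Type} [Fintype ι] [DecidableEq ι] (f : ℂ → ℂ)
    (A : Tensor ι ι p) : Tensor ι ι p :=
  bcircInv (hermFun f (bcirc A))

/-- The tensor square root of a (PSD) F-square tensor. -/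
noncomputable def tsqrt {ι : Type} [Fintype ι] [DecidableEq ι] (A : Tensor ι ι p) :
    Tensor ι ι p :=
  bcircInv (msqrt (bcirc A))

/-- 2×2 block tensor, formed by block-concatenating frontal slices. -/
def tblock {ι₁ ι₂ κ₁ κ₂ : Type} (A : Tensor ι₁ κ₁ p) (B : Tensor ι₁ κ₂ p)
    (C : Tensor ι₂ κ₁ p) (D : Tensor ι₂ κ₂ p) : Tensor (ι₁ ⊕ ι₂) (κ₁ ⊕ κ₂) p :=
  fun k => Matrix.fromBlocks (A k) (B k) (C k) (D k)

end TProd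

open TProd Matrix Kronecker

/-- A rectangular matrix is (generalized) diagonal with nonnegative real entries. -/
def IsRectDiag {ι κ : Type} (S : Matrix ι κ ℂ) : Prop :=
  (∀ a b b', S a b ≠ 0 → S a b' ≠ 0 → b = b') ∧
  (∀ a a' b, S a b ≠ 0 → S a' b ≠ 0 → a = a') ∧
  (∀ a b, 0 ≤ (S a b).re ∧ (S a b).im = 0)

/-- `(U, S, V)` is a singular value decomposition of the matrix `M`. -/
def IsMSVD {ι κ : Type} [Fintype ι] [Fintype κ] [DecidableEq ι] [DecidableEq κ]
    (M : Matrix ι κ ℂ) (U : Matrix ι ι ℂ) (S : Matrix ι κ ℂ) (V : Matrix κ κ ℂ) : Prop :=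
  Uᴴ * U = 1 ∧ U * Uᴴ = 1 ∧ Vᴴ * V = 1 ∧ V * Vᴴ = 1 ∧ IsRectDiag S ∧ M = U * S * Vᴴ

open Classical in
/-- The generalized matrix function (Hawkins–Ben-Israel), defined via the matrix SVD
by applying the scalar function to the singular values. -/
noncomputable def gmf {ι κ : Type} [Fintype ι] [Fintype κ] [DecidableEq ι] [DecidableEq κ]
    (f : ℂ → ℂ) (M : Matrix ι κ ℂ) : Matrix ι κ ℂ :=
  if h : ∃ t : Matrix ι ι ℂ × Matrix ι κ ℂ × Matrix κ κ ℂ,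
      IsMSVD M t.1 t.2.1 t.2.2 then
    h.choose.1 * (h.choose.2.1.map f) * h.choose.2.2ᴴ
  else 0

/-!
A T-SVD `A = U * S * Vᴴ` becomes, under `bcirc` and conjugation by `F ⊗ I`, the matrix SVD
`bcirc A = (bcirc U (F ⊗ I)) (fblocks S) (bcirc V (F ⊗ I))ᴴ`. Since `f 0 = 0` (`f` is odd), the
generalized matrix function does not depend on the chosen SVD: `U f(Σ) Vᴴ = g(M Mᴴ) M` with
`g (σ ^ 2) = f σ / σ`. Hence `f^◇(bcirc A)` is `f` applied entrywise to `fblocks S`, conjugated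
back by `F ⊗ I`. The matrix `fblocks S` is block diagonal, so its image under `f` is too, and
conjugating back gives the block circulant matrix `bcirc (fhat f S)`, i.e. `bcirc (f^◇ A)`.
A T-SVD exists because every Fourier block of `A` has a matrix SVD.
-/

namespace TProd

section Fourier

open ComplexConjugate

variable {p : ℕ} [NeZero p]

noncomputable def fourierRoot (p : ℕ) : ℂ := Complex.exp (-(2 * Real.pi * Complex.I) / p)

omit [NeZero p] in
lemma fourierRoot_ne_zero : fourierRoot p ≠ 0 := Complex.exp_ne_zero _

lemma isPrimitiveRoot_fourierRoot : IsPrimitiveRoot (fourierRoot p) p := by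
  have h := (Complex.isPrimitiveRoot_exp p (NeZero.ne p)).inv
  rwa [← Complex.exp_neg, ← neg_div] at h

lemma fourierRoot_pow_inj {j l : Fin p}
    (h : fourierRoot p ^ (j : ℕ) = fourierRoot p ^ (l : ℕ)) : j = l :=
  Fin.ext (isPrimitiveRoot_fourierRoot.pow_inj j.isLt l.isLt h)

lemma conj_fourierRoot_pow (n : ℕ) : conj (fourierRoot p ^ n) = (fourierRoot p ^ n)⁻¹ := by
  have h : ‖fourierRoot p‖ = 1 :=
    Complex.norm_eq_one_of_pow_eq_one isPrimitiveRoot_fourierRoot.pow_eq_one (NeZero.ne p)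
  rw [Complex.inv_eq_conj (by rw [norm_pow, h, one_pow])]

omit [NeZero p] in
lemma Fmat_apply (j k : Fin p) :
    Fmat p j k = fourierRoot p ^ ((j : ℕ) * k) / (Real.sqrt p : ℂ) := by
  rw [Fmat, of_apply, fourierRoot, ← Complex.exp_nat_mul]
  push_cast
  ring_nf

lemma Fmat_add_left (j t k : Fin p) :
    Fmat p (j + t) k = fourierRoot p ^ ((t : ℕ) * k) * Fmat p j k := by
  rw [Fmat_apply, Fmat_apply, mul_div_assoc', pow_mul, Fin.val_add,
    ← pow_eq_pow_mod _ isPrimitiveRoot_fourierRoot.pow_eq_one, pow_add, mul_pow, ← pow_mul,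
    ← pow_mul]
  ring

lemma Fmat_add_one_left (j k : Fin p) :
    Fmat p (j + 1) k = fourierRoot p ^ (k : ℕ) * Fmat p j k := by
  rw [Fmat_add_left, Fin.val_one', pow_mul,
    ← pow_eq_pow_mod _ isPrimitiveRoot_fourierRoot.pow_eq_one, pow_one]

lemma sum_conj_fourierRoot_pow_mul (j l : Fin p) :
    ∑ k : Fin p, conj (fourierRoot p ^ ((k : ℕ) * j)) * fourierRoot p ^ ((k : ℕ) * l) =
      if j = l then (p : ℂ) else 0 := by
  set u := (fourierRoot p ^ (j : ℕ))⁻¹ * fourierRoot p ^ (l : ℕ)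
  have hu : ∀ k : ℕ, conj (fourierRoot p ^ (k * j)) * fourierRoot p ^ (k * l) = u ^ k := by
    intro k
    rw [conj_fourierRoot_pow, mul_comm k, mul_comm k, pow_mul, pow_mul, ← inv_pow, ← mul_pow]
  simp_rw [hu, Fin.sum_univ_eq_sum_range (u ^ ·)]
  split_ifs with hjl
  · simp [u, hjl, fourierRoot_ne_zero]
  · have hu1 : u ≠ 1 := fun h =>
      hjl (fourierRoot_pow_inj ((inv_mul_eq_one₀ (pow_ne_zero _ fourierRoot_ne_zero)).mp h))
    have hup : u ^ p = 1 := by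
      rw [mul_pow, inv_pow, pow_right_comm _ (j : ℕ), pow_right_comm _ (l : ℕ),
        isPrimitiveRoot_fourierRoot.pow_eq_one, one_pow, one_pow, inv_one, one_mul]
    rw [geom_sum_eq hu1, hup, sub_self, zero_div]

lemma Fmat_conjTranspose_mul_self : (Fmat p)ᴴ * Fmat p = 1 := by
  have hp : ((Real.sqrt p : ℝ) : ℂ) * (Real.sqrt p : ℂ) = p := by
    rw [← Complex.ofReal_mul, Real.mul_self_sqrt (Nat.cast_nonneg p), Complex.ofReal_natCast]
  ext j l
  simp only [mul_apply, conjTranspose_apply, Fmat_apply, star_div₀, Complex.star_def,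
    Complex.conj_ofReal, div_mul_div_comm, ← Finset.sum_div, hp]
  rw [sum_conj_fourierRoot_pow_mul, one_apply]
  split_ifs
  · exact div_self (Nat.cast_ne_zero.mpr (NeZero.ne p))
  · exact zero_div _

end Fourier

section Bcirc

variable {p : ℕ} [NeZero p] {ι κ μ : Type}

def IsBlockCirc (M : Matrix (Fin p × ι) (Fin p × κ) ℂ) : Prop :=
  ∀ t j l a b, M (j + t, a) (l + t, b) = M (j, a) (l, b)

lemma isBlockCirc_bcirc (A : Tensor ι κ p) : IsBlockCirc (bcirc A) := fun t j l a b => by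
  simp only [bcirc, of_apply, add_sub_add_right_eq_sub]

lemma bcircInv_bcirc (A : Tensor ι κ p) : bcircInv (bcirc A) = A := by
  funext k
  ext a b
  simp [bcircInv, bcirc]

lemma bcirc_injective : Function.Injective (bcirc : Tensor ι κ p → _) :=
  Function.LeftInverse.injective bcircInv_bcirc

lemma bcirc_bcircInv {M : Matrix (Fin p × ι) (Fin p × κ) ℂ} (hM : IsBlockCirc M) :
    bcirc (bcircInv M) = M := by
  ext ⟨j, a⟩ ⟨l, b⟩
  simpa [bcirc, bcircInv] using (hM l (j - l) 0 a b).symm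

lemma bcirc_tprod [Fintype κ] (A : Tensor ι κ p) (B : Tensor κ μ p) :
    bcirc (tprod A B) = bcirc A * bcirc B := by
  ext ⟨j, a⟩ ⟨l, b⟩
  simp only [tprod, tfold, tunfold, bcirc, of_apply, mul_apply, Fintype.sum_prod_type]
  refine Fintype.sum_equiv (Equiv.addRight l) _ _ fun k => ?_
  simp only [Equiv.coe_addRight, add_sub_cancel_right, sub_sub, add_comm l k]

lemma bcirc_tconjT (A : Tensor ι κ p) : bcirc (tconjT A) = (bcirc A)ᴴ := by
  ext ⟨j, a⟩ ⟨l, b⟩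
  simp [bcirc, tconjT]

lemma bcirc_tid [DecidableEq ι] : bcirc (tid ι p) = 1 := by
  ext ⟨j, a⟩ ⟨l, b⟩
  by_cases h : j = l <;> simp [bcirc, tid, one_apply, h, sub_eq_zero]

lemma isTUnitary_iff_mem_unitary [Fintype ι] [DecidableEq ι] {Q : Tensor ι ι p} :
    IsTUnitary Q ↔ bcirc Q ∈ unitary (Matrix (Fin p × ι) (Fin p × ι) ℂ) := by
  simp only [IsTUnitary, ← bcirc_injective.eq_iff, bcirc_tprod, bcirc_tconjT, bcirc_tid,
    Unitary.mem_iff, star_eq_conjTranspose]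

end Bcirc

section BlockDiag

variable {p : ℕ} {ι κ μ : Type}

-- `Matrix.blockDiagonal` with the block index moved to the first coordinate, as in `bcirc`.
def bdiag (N : Fin p → Matrix ι κ ℂ) : Matrix (Fin p × ι) (Fin p × κ) ℂ :=
  (blockDiagonal N).submatrix Prod.swap Prod.swap

lemma bdiag_apply (N : Fin p → Matrix ι κ ℂ) (j l : Fin p) (a : ι) (b : κ) :
    bdiag N (j, a) (l, b) = if j = l then N j a b else 0 := rfl

lemma bdiag_mul [Fintype κ] (N : Fin p → Matrix ι κ ℂ) (N' : Fin p → Matrix κ μ ℂ) :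
    bdiag N * bdiag N' = bdiag (fun j => N j * N' j) := by
  rw [bdiag, bdiag, bdiag, ← submatrix_mul _ _ _ _ _ Prod.swap_bijective, blockDiagonal_mul]

lemma bdiag_conjTranspose (N : Fin p → Matrix ι κ ℂ) :
    (bdiag N)ᴴ = bdiag (fun j => (N j)ᴴ) := by
  rw [bdiag, bdiag, conjTranspose_submatrix, blockDiagonal_conjTranspose]

lemma bdiag_one [DecidableEq ι] : bdiag (1 : Fin p → Matrix ι ι ℂ) = 1 := by
  rw [bdiag, blockDiagonal_one]
  exact submatrix_one_equiv (Equiv.prodComm _ _)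

lemma bdiag_map {f : ℂ → ℂ} (hf : f 0 = 0) (N : Fin p → Matrix ι κ ℂ) :
    (bdiag N).map f = bdiag (fun j => (N j).map f) := by
  rw [bdiag, bdiag, ← submatrix_map, blockDiagonal_map _ _ hf]

lemma eq_bdiag_of_apply_eq_zero {M : Matrix (Fin p × ι) (Fin p × κ) ℂ}
    (hM : ∀ j l a b, j ≠ l → M (j, a) (l, b) = 0) :
    M = bdiag (fun j => of fun a b => M (j, a) (j, b)) := by
  ext ⟨j, a⟩ ⟨l, b⟩
  rw [bdiag_apply]
  split_ifs with h
  · subst h; rfl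
  · exact hM j l a b h

lemma bdiag_mem_unitary [Fintype ι] [DecidableEq ι] {N : Fin p → Matrix ι ι ℂ}
    (hN : ∀ j, N j ∈ unitary (Matrix ι ι ℂ)) :
    bdiag N ∈ unitary (Matrix (Fin p × ι) (Fin p × ι) ℂ) := by
  simp only [Unitary.mem_iff, star_eq_conjTranspose, bdiag_conjTranspose, bdiag_mul] at hN ⊢
  simp only [fun j => (hN j).1, fun j => (hN j).2]
  exact ⟨bdiag_one, bdiag_one⟩

lemma isRectDiag_bdiag {N : Fin p → Matrix ι κ ℂ} (hN : ∀ j, IsRectDiag (N j)) :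
    IsRectDiag (bdiag N) := by
  refine ⟨?_, ?_, ?_⟩
  · rintro ⟨j, a⟩ ⟨l, b⟩ ⟨l', b'⟩ h h'
    rw [bdiag_apply] at h h'
    split_ifs at h h' with hl hl'
    · subst hl hl'
      rw [(hN _).1 a b b' h h']
    all_goals exact absurd rfl ‹_›
  · rintro ⟨j, a⟩ ⟨j', a'⟩ ⟨l, b⟩ h h'
    rw [bdiag_apply] at h h'
    split_ifs at h h' with hl hl'
    · subst hl hl'
      rw [(hN _).2.1 a a' b h h']
    all_goals exact absurd rfl ‹_›
  · rintro ⟨j, a⟩ ⟨l, b⟩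
    rw [bdiag_apply]
    split_ifs
    · exact (hN j).2.2 a b
    · simp

end BlockDiag

section FourierBlocks

open ComplexConjugate

variable {p : ℕ} [NeZero p] {ι κ μ : Type} [Fintype ι] [Fintype κ] [Fintype μ]
  [DecidableEq ι] [DecidableEq κ]

variable (p ι) in
noncomputable def fourierKron : Matrix (Fin p × ι) (Fin p × ι) ℂ := Fmat p ⊗ₖ (1 : Matrix ι ι ℂ)

lemma fourierKron_mem_unitary : fourierKron p ι ∈ unitary (Matrix (Fin p × ι) (Fin p × ι) ℂ) :=
  kronecker_mem_unitary (mem_unitaryGroup_iff'.mpr Fmat_conjTranspose_mul_self) (one_mem _)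

lemma fourierKron_conjTranspose_mul_self : (fourierKron p ι)ᴴ * fourierKron p ι = 1 :=
  Unitary.star_mul_self_of_mem fourierKron_mem_unitary

lemma fourierKron_mul_conjTranspose_self : fourierKron p ι * (fourierKron p ι)ᴴ = 1 :=
  Unitary.mul_star_self_of_mem fourierKron_mem_unitary

omit [NeZero p] [Fintype ι] in
lemma conjTranspose_fourierKron : (fourierKron p ι)ᴴ = (Fmat p)ᴴ ⊗ₖ (1 : Matrix ι ι ℂ) := by
  rw [fourierKron, conjTranspose_kronecker, conjTranspose_one]

omit [NeZero p] in
lemma fblocks_eq (A : Tensor ι κ p) :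
    fblocks A = (fourierKron p ι)ᴴ * bcirc A * fourierKron p κ := by
  rw [fblocks, conjTranspose_fourierKron, fourierKron]

lemma bcirc_eq_conj_fblocks (A : Tensor ι κ p) :
    bcirc A = fourierKron p ι * fblocks A * (fourierKron p κ)ᴴ := by
  rw [fblocks_eq, ← Matrix.mul_assoc, ← Matrix.mul_assoc, fourierKron_mul_conjTranspose_self,
    Matrix.one_mul, Matrix.mul_assoc, fourierKron_mul_conjTranspose_self, Matrix.mul_one]

lemma fblocks_eq_of_bcirc_eq {A : Tensor ι κ p} {D : Matrix (Fin p × ι) (Fin p × κ) ℂ}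
    (h : bcirc A = fourierKron p ι * D * (fourierKron p κ)ᴴ) : fblocks A = D := by
  rw [fblocks_eq, h, ← Matrix.mul_assoc, ← Matrix.mul_assoc, fourierKron_conjTranspose_mul_self,
    Matrix.one_mul, Matrix.mul_assoc, fourierKron_conjTranspose_mul_self, Matrix.mul_one]

lemma fourierKron_conj_mul_conj [DecidableEq μ] (X : Matrix (Fin p × ι) (Fin p × κ) ℂ)
    (Y : Matrix (Fin p × κ) (Fin p × μ) ℂ) :
    fourierKron p ι * X * (fourierKron p κ)ᴴ * (fourierKron p κ * Y * (fourierKron p μ)ᴴ) =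
      fourierKron p ι * (X * Y) * (fourierKron p μ)ᴴ := by
  simp only [Matrix.mul_assoc]
  rw [← Matrix.mul_assoc (fourierKron p κ)ᴴ, fourierKron_conjTranspose_mul_self, Matrix.one_mul]

omit [NeZero p] in
lemma fourierKron_conj_conjTranspose (X : Matrix (Fin p × ι) (Fin p × κ) ℂ) :
    (fourierKron p ι * X * (fourierKron p κ)ᴴ)ᴴ = fourierKron p κ * Xᴴ * (fourierKron p ι)ᴴ := by
  simp only [conjTranspose_mul, conjTranspose_conjTranspose, Matrix.mul_assoc]

omit [NeZero p] in
lemma fourierKron_mul_bdiag_mul_apply (N : Fin p → Matrix ι κ ℂ) (j l : Fin p) (a : ι) (b : κ) :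
    (fourierKron p ι * bdiag N * (fourierKron p κ)ᴴ) (j, a) (l, b) =
      ∑ k, Fmat p j k * conj (Fmat p l k) * N k a b := by
  simp [fourierKron, mul_apply, Fintype.sum_prod_type, bdiag_apply, one_apply, apply_ite conj,
    mul_comm _ (N _ _ _)]
  exact Finset.sum_congr rfl fun _ _ => by ring

omit [NeZero p] in
lemma conjTranspose_fourierKron_mul_mul_apply (M : Matrix (Fin p × ι) (Fin p × κ) ℂ)
    (j l : Fin p) (a : ι) (b : κ) :
    ((fourierKron p ι)ᴴ * M * fourierKron p κ) (j, a) (l, b) =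
      ∑ k, ∑ k', conj (Fmat p k j) * M (k, a) (k', b) * Fmat p k' l := by
  simp [fourierKron, mul_apply, Fintype.sum_prod_type, one_apply, apply_ite conj, Finset.sum_mul]
  exact Finset.sum_comm

lemma isBlockCirc_fourierKron_mul_bdiag (N : Fin p → Matrix ι κ ℂ) :
    IsBlockCirc (fourierKron p ι * bdiag N * (fourierKron p κ)ᴴ) := by
  intro t j l a b
  simp only [fourierKron_mul_bdiag_mul_apply, Fmat_add_left, map_mul, conj_fourierRoot_pow]
  refine Finset.sum_congr rfl fun k _ => ?_
  have h : fourierRoot p ^ ((t : ℕ) * k) ≠ 0 := pow_ne_zero _ fourierRoot_ne_zero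
  field_simp

lemma conjTranspose_fourierKron_mul_mul_apply_of_ne {M : Matrix (Fin p × ι) (Fin p × κ) ℂ}
    (hM : IsBlockCirc M) {j l : Fin p} (hjl : j ≠ l) (a : ι) (b : κ) :
    ((fourierKron p ι)ᴴ * M * fourierKron p κ) (j, a) (l, b) = 0 := by
  set X := ((fourierKron p ι)ᴴ * M * fourierKron p κ) (j, a) (l, b)
  set c := (fourierRoot p ^ (j : ℕ))⁻¹ * fourierRoot p ^ (l : ℕ)
  have hc : c ≠ 1 := fun h =>
    hjl (fourierRoot_pow_inj ((inv_mul_eq_one₀ (pow_ne_zero _ fourierRoot_ne_zero)).mp h))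
  -- shifting both block indices by one fixes `M` and rescales the Fourier block `(j, l)` by `c`
  have hX : X = c * X := by
    simp only [X, conjTranspose_fourierKron_mul_mul_apply, Finset.mul_sum]
    rw [← Equiv.sum_comp (Equiv.addRight 1)]
    refine Finset.sum_congr rfl fun k _ => ?_
    rw [← Equiv.sum_comp (Equiv.addRight 1)]
    refine Finset.sum_congr rfl fun k' _ => ?_
    simp only [Equiv.coe_addRight, hM 1 k k' a b, Fmat_add_one_left, map_mul,
      conj_fourierRoot_pow, c]
    ring
  have : (1 - c) * X = 0 := by rw [sub_mul, one_mul, ← hX, sub_self]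
  exact (mul_eq_zero.mp this).resolve_left (sub_ne_zero.mpr hc.symm)

lemma exists_fblocks_eq_bdiag (A : Tensor ι κ p) : ∃ N, fblocks A = bdiag N :=
  ⟨_, eq_bdiag_of_apply_eq_zero fun _ _ a b hjl => by
    rw [fblocks_eq]
    exact conjTranspose_fourierKron_mul_mul_apply_of_ne (isBlockCirc_bcirc A) hjl a b⟩

end FourierBlocks

end TProd

section SVD

open scoped InnerProductSpace
open Module

lemma exists_orthonormalBasis_eq_norm_smul_of_orthogonal {𝕜 E ι κ : Type*} [RCLike 𝕜]
    [NormedAddCommGroup E] [InnerProductSpace 𝕜 E] [FiniteDimensional 𝕜 E] [Fintype ι]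
    [Fintype κ] (hι : finrank 𝕜 E = Fintype.card ι) {x : κ → E}
    (hx : Pairwise fun j j' => ⟪x j, x j'⟫_𝕜 = 0) :
    ∃ (b : OrthonormalBasis ι 𝕜 E) (e : {j // x j ≠ 0} ↪ ι),
      ∀ j : {j // x j ≠ 0}, x j = (‖(x j : E)‖ : 𝕜) • b (e j) := by
  classical
  let w : {j // x j ≠ 0} → E := fun j => (‖x j‖⁻¹ : 𝕜) • x j
  have hw : Orthonormal 𝕜 w := ⟨fun j => norm_smul_inv_norm j.2, fun j j' h => by
    simp [w, inner_smul_left, inner_smul_right, hx (Subtype.coe_injective.ne h)]⟩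
  obtain ⟨e⟩ := Function.Embedding.nonempty_of_card_le
    (hι ▸ hw.linearIndependent.fintype_card_le_finrank)
  have hv : (Set.range e).domRestrict (Function.extend e w 0) =
      w ∘ (Equiv.ofInjective e e.injective).symm := by
    funext ⟨_, j, rfl⟩
    simp [e.injective.extend_apply]
  obtain ⟨b, hb⟩ := Orthonormal.exists_orthonormalBasis_extension_of_card_eq hι
    (hv ▸ hw.comp _ (Equiv.injective _))
  refine ⟨b, e, fun j => ?_⟩
  have hbe : b (e j) = w j := by rw [hb _ ⟨_, rfl⟩, e.injective.extend_apply]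
  have hx0 : (‖(x j : E)‖ : 𝕜) ≠ 0 := by simpa using j.2
  rw [hbe, smul_smul, mul_inv_cancel₀ hx0, one_smul]

lemma isRectDiag_of_apply_ne_zero {ι κ : Type} {S : Matrix ι κ ℂ} {P : κ → Prop} (e : Subtype P ↪ ι)
    {σ : κ → ℝ} (hσ : ∀ j, 0 ≤ σ j)
    (hS : ∀ i j, S i j ≠ 0 → ∃ h : P j, i = e ⟨j, h⟩ ∧ S i j = σ j) : IsRectDiag S := by
  refine ⟨fun a c c' h h' => ?_, fun a a' c h h' => ?_, fun a c => ?_⟩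
  · obtain ⟨_, ha, -⟩ := hS _ _ h
    obtain ⟨_, ha', -⟩ := hS _ _ h'
    exact congrArg Subtype.val (e.injective (ha.symm.trans ha'))
  · obtain ⟨_, ha, -⟩ := hS _ _ h
    obtain ⟨_, ha', -⟩ := hS _ _ h'
    exact ha.trans ha'.symm
  · by_cases h : S a c = 0
    · simp [h]
    · obtain ⟨-, -, hv⟩ := hS _ _ h
      simp [hv, hσ]

variable {ι κ : Type} [Fintype ι] [Fintype κ] [DecidableEq ι] [DecidableEq κ]

omit [DecidableEq κ] in
lemma exists_unitary_mul_isRectDiag {B : Matrix ι κ ℂ} (hB : (Bᴴ * B).IsDiag) :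
    ∃ (U : Matrix ι ι ℂ) (S : Matrix ι κ ℂ),
      Uᴴ * U = 1 ∧ U * Uᴴ = 1 ∧ IsRectDiag S ∧ B = U * S := by
  let col : κ → EuclideanSpace ℂ ι := fun j => WithLp.toLp 2 (Bᵀ j)
  have hcol : ∀ j j', ⟪col j, col j'⟫_ℂ = (Bᴴ * B) j j' := fun j j' => by
    simp only [EuclideanSpace.inner_toLp_toLp, dotProduct, mul_apply, conjTranspose_apply, col,
      transpose_apply, Pi.star_apply, mul_comm]
  obtain ⟨b, e, hbe⟩ := exists_orthonormalBasis_eq_norm_smul_of_orthogonal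
    (finrank_euclideanSpace (𝕜 := ℂ)) fun j j' h => (hcol j j').trans (hB h)
  set U := (EuclideanSpace.basisFun ι ℂ).toBasis.toMatrix b
  have hU : U * Uᴴ = 1 :=
    (EuclideanSpace.basisFun ι ℂ).toMatrix_orthonormalBasis_self_mul_conjTranspose b
  have hS : ∀ i j, (Uᴴ * B) i j = ⟪b i, col j⟫_ℂ := fun i j => by
    simp only [mul_apply, conjTranspose_apply, U, Basis.toMatrix_apply,
      OrthonormalBasis.coe_toBasis_repr_apply, EuclideanSpace.basisFun_repr,
      EuclideanSpace.inner_eq_star_dotProduct, dotProduct, col, transpose_apply, mul_comm]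
    rfl
  refine ⟨U, Uᴴ * B,
    (EuclideanSpace.basisFun ι ℂ).toMatrix_orthonormalBasis_conjTranspose_mul_self b, hU,
    isRectDiag_of_apply_ne_zero e (fun j => norm_nonneg (col j)) fun i j hij => ?_,
    by rw [← Matrix.mul_assoc, hU, Matrix.one_mul]⟩
  rw [hS] at hij ⊢
  by_cases h : col j = 0
  · simp [h] at hij
  have hval : ⟪b i, col j⟫_ℂ = if i = e ⟨j, h⟩ then (‖col j‖ : ℂ) else 0 := by
    conv_lhs => rw [hbe ⟨j, h⟩]
    rw [inner_smul_right, orthonormal_iff_ite.mp b.orthonormal, mul_ite, mul_one, mul_zero]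
    rfl
  rw [hval] at hij ⊢
  split_ifs at hij ⊢ with hi
  · exact ⟨h, hi, rfl⟩
  · exact absurd rfl hij

lemma exists_isMSVD (M : Matrix ι κ ℂ) :
    ∃ t : Matrix ι ι ℂ × Matrix ι κ ℂ × Matrix κ κ ℂ, IsMSVD M t.1 t.2.1 t.2.2 := by
  have hH := isHermitian_conjTranspose_mul_self M
  set V : Matrix κ κ ℂ := (hH.eigenvectorUnitary : Matrix κ κ ℂ)
  have hV₁ : Vᴴ * V = 1 := Unitary.star_mul_self_of_mem hH.eigenvectorUnitary.2
  have hV₂ : V * Vᴴ = 1 := Unitary.mul_star_self_of_mem hH.eigenvectorUnitary.2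
  have hdiag : ((M * V)ᴴ * (M * V)).IsDiag := by
    have h := hH.conjStarAlgAut_star_eigenvectorUnitary
    rw [Unitary.conjStarAlgAut_star_apply] at h
    rw [conjTranspose_mul, Matrix.mul_assoc, ← Matrix.mul_assoc Mᴴ, ← Matrix.mul_assoc]
    exact h ▸ isDiag_diagonal _
  obtain ⟨U, S, hU₁, hU₂, hS, hMV⟩ := exists_unitary_mul_isRectDiag hdiag
  refine ⟨(U, S, V), hU₁, hU₂, hV₁, hV₂, hS, ?_⟩
  rw [← hMV, Matrix.mul_assoc, hV₂, Matrix.mul_one]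

end SVD

section GMF

lemma Matrix.diagonal_comp_mul_eq_mul_diagonal_comp {m n R : Type*} [Fintype m] [Fintype n]
    [DecidableEq m] [DecidableEq n] [CommRing R] [NoZeroDivisors R] (g : R → R) {d₁ : n → R}
    {d₂ : m → R} {W : Matrix m n R} (h : diagonal d₂ * W = W * diagonal d₁) :
    diagonal (g ∘ d₂) * W = W * diagonal (g ∘ d₁) := by
  ext a b
  have hab : d₂ a * W a b = W a b * d₁ b := by simpa using congr_fun (congr_fun h a) b
  simp only [diagonal_mul, mul_diagonal, Function.comp_apply]
  by_cases hW : W a b = 0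
  · simp [hW]
  · rw [mul_right_cancel₀ hW (hab.trans (mul_comm _ _)), mul_comm]

lemma Matrix.mul_diagonal_comp_mul_conjTranspose_eq {n R : Type*} [Fintype n] [DecidableEq n]
    [CommRing R] [StarRing R] [NoZeroDivisors R] (g : R → R) {U₁ U₂ : Matrix n n R}
    {d₁ d₂ : n → R} (hU₁ : U₁ᴴ * U₁ = 1) (hU₂ : U₂ᴴ * U₂ = 1)
    (h : U₁ * diagonal d₁ * U₁ᴴ = U₂ * diagonal d₂ * U₂ᴴ) :
    U₁ * diagonal (g ∘ d₁) * U₁ᴴ = U₂ * diagonal (g ∘ d₂) * U₂ᴴ := by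
  have hU₁' : U₁ * U₁ᴴ = 1 := mul_eq_one_comm.mp hU₁
  have hU₂' : U₂ * U₂ᴴ = 1 := mul_eq_one_comm.mp hU₂
  have hW : diagonal d₂ * (U₂ᴴ * U₁) = (U₂ᴴ * U₁) * diagonal d₁ := by
    calc diagonal d₂ * (U₂ᴴ * U₁) = U₂ᴴ * (U₂ * diagonal d₂ * U₂ᴴ) * U₁ := by
          simp only [← mul_assoc, hU₂, one_mul]
      _ = U₂ᴴ * U₁ * diagonal d₁ := by
          simp only [← h, mul_assoc, hU₁, mul_one]
  have hg := diagonal_comp_mul_eq_mul_diagonal_comp g hW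
  calc U₁ * diagonal (g ∘ d₁) * U₁ᴴ = U₂ * (U₂ᴴ * U₁ * diagonal (g ∘ d₁)) * U₁ᴴ := by
        simp only [← mul_assoc, hU₂', one_mul]
    _ = U₂ * diagonal (g ∘ d₂) * U₂ᴴ := by
        simp only [← hg, mul_assoc, hU₁', mul_one]

variable {ι κ : Type} [Fintype ι] [Fintype κ] [DecidableEq ι] [DecidableEq κ]
  {M : Matrix ι κ ℂ} {U : Matrix ι ι ℂ} {S : Matrix ι κ ℂ} {V : Matrix κ κ ℂ}

omit [Fintype ι] [DecidableEq ι] [DecidableEq κ] in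
lemma IsRectDiag.isDiag_mul_conjTranspose (hS : IsRectDiag S) : (S * Sᴴ).IsDiag := by
  intro a a' haa'
  refine Finset.sum_eq_zero fun c _ => ?_
  by_cases h : S a c = 0
  · simp [h]
  by_cases h' : S a' c = 0
  · simp [h']
  exact absurd (hS.2.1 a a' c h h') haa'

omit [DecidableEq κ] in
lemma IsRectDiag.map_eq_diagonal_mul (hS : IsRectDiag S) {f : ℂ → ℂ} (hf0 : f 0 = 0) :
    S.map f = diagonal ((fun z : ℂ => f (√z.re : ℝ) / (√z.re : ℝ)) ∘ (S * Sᴴ).diag) * S := by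
  ext a b
  rw [map_apply, diagonal_mul]
  by_cases hz : S a b = 0
  · rw [hz, hf0, mul_zero]
  obtain ⟨hre, him⟩ := hS.2.2 a b
  have hSab : S a b = ((S a b).re : ℂ) := Complex.ext rfl (by simp [him])
  have hdiag : (S * Sᴴ).diag a = ((S a b).re ^ 2 : ℝ) := by
    rw [diag_apply, mul_apply, Finset.sum_eq_single b]
    · rw [conjTranspose_apply, hSab]; simp [sq]
    · intro c _ hc
      rw [show S a c = 0 from by_contra fun h => hc (hS.1 a c b h hz), zero_mul]
    · simp
  rw [Function.comp_apply, hdiag, Complex.ofReal_re, Real.sqrt_sq hre, ← hSab,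
    div_mul_cancel₀ _ hz]

lemma IsMSVD.mul_conjTranspose_self (h : IsMSVD M U S V) :
    M * Mᴴ = U * diagonal (S * Sᴴ).diag * Uᴴ := by
  obtain ⟨-, -, hV, -, hS, rfl⟩ := h
  rw [hS.isDiag_mul_conjTranspose.diagonal_diag]
  simp only [conjTranspose_mul, conjTranspose_conjTranspose, Matrix.mul_assoc]
  rw [← Matrix.mul_assoc Vᴴ, hV, Matrix.one_mul]

-- The right side depends on the SVD only through `M Mᴴ = U (Σ Σᴴ) Uᴴ`.
lemma IsMSVD.mul_map_mul_conjTranspose (h : IsMSVD M U S V) {f : ℂ → ℂ} (hf0 : f 0 = 0) :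
    U * S.map f * Vᴴ =
      U * diagonal ((fun z : ℂ => f (√z.re : ℝ) / (√z.re : ℝ)) ∘ (S * Sᴴ).diag) * Uᴴ * M := by
  obtain ⟨hU, -, -, -, hS, rfl⟩ := h
  rw [hS.map_eq_diagonal_mul hf0]
  simp only [Matrix.mul_assoc]
  rw [← Matrix.mul_assoc Uᴴ, hU, Matrix.one_mul]

lemma gmf_eq_of_isMSVD {f : ℂ → ℂ} (hf0 : f 0 = 0) (h : IsMSVD M U S V) :
    gmf f M = U * S.map f * Vᴴ := by
  have hex : ∃ t : Matrix ι ι ℂ × Matrix ι κ ℂ × Matrix κ κ ℂ, IsMSVD M t.1 t.2.1 t.2.2 :=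
    ⟨(U, S, V), h⟩
  have h' := hex.choose_spec
  rw [gmf, dif_pos hex, h'.mul_map_mul_conjTranspose hf0, h.mul_map_mul_conjTranspose hf0,
    mul_diagonal_comp_mul_conjTranspose_eq _ h'.1 h.1
      (h'.mul_conjTranspose_self.symm.trans h.mul_conjTranspose_self)]

end GMF

namespace TProd

section TSVD

variable {p : ℕ} [NeZero p] {ι κ : Type} [Fintype ι] [Fintype κ] [DecidableEq ι] [DecidableEq κ]

variable (p) in
noncomputable def ofFourierBlocks (N : Fin p → Matrix ι κ ℂ) : Tensor ι κ p :=
  bcircInv (fourierKron p ι * bdiag N * (fourierKron p κ)ᴴ)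

lemma bcirc_ofFourierBlocks (N : Fin p → Matrix ι κ ℂ) :
    bcirc (ofFourierBlocks p N) = fourierKron p ι * bdiag N * (fourierKron p κ)ᴴ :=
  bcirc_bcircInv (isBlockCirc_fourierKron_mul_bdiag N)

lemma isTUnitary_ofFourierBlocks {N : Fin p → Matrix ι ι ℂ}
    (hN : ∀ j, N j ∈ unitary (Matrix ι ι ℂ)) : IsTUnitary (ofFourierBlocks p N) := by
  rw [isTUnitary_iff_mem_unitary, bcirc_ofFourierBlocks]
  exact mul_mem (mul_mem fourierKron_mem_unitary (bdiag_mem_unitary hN))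
    (Unitary.star_mem fourierKron_mem_unitary)

lemma isFDiag_ofFourierBlocks {N : Fin p → Matrix ι κ ℂ} (hN : ∀ j, IsRectDiag (N j)) :
    IsFDiag (ofFourierBlocks p N) := by
  rw [IsFDiag, fblocks_eq_of_bcirc_eq (bcirc_ofFourierBlocks N)]
  exact ⟨fun j l a b h => by_contra fun hjl => h (if_neg hjl), isRectDiag_bdiag hN⟩

lemma exists_isTSVD (A : Tensor ι κ p) :
    ∃ t : Tensor ι ι p × Tensor ι κ p × Tensor κ κ p, IsTSVD A t.1 t.2.1 t.2.2 := by
  obtain ⟨N, hN⟩ := exists_fblocks_eq_bdiag A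
  choose t ht using fun j => exists_isMSVD (N j)
  refine ⟨(ofFourierBlocks p fun j => (t j).1, ofFourierBlocks p fun j => (t j).2.1,
      ofFourierBlocks p fun j => (t j).2.2),
    isTUnitary_ofFourierBlocks fun j => Unitary.mem_iff.mpr ⟨(ht j).1, (ht j).2.1⟩,
    isTUnitary_ofFourierBlocks fun j => Unitary.mem_iff.mpr ⟨(ht j).2.2.1, (ht j).2.2.2.1⟩,
    isFDiag_ofFourierBlocks fun j => (ht j).2.2.2.2.1, bcirc_injective ?_⟩
  rw [bcirc_tprod, bcirc_tprod, bcirc_tconjT, bcirc_ofFourierBlocks, bcirc_ofFourierBlocks,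
    bcirc_ofFourierBlocks, fourierKron_conj_conjTranspose, fourierKron_conj_mul_conj,
    fourierKron_conj_mul_conj, bdiag_conjTranspose, bdiag_mul, bdiag_mul,
    bcirc_eq_conj_fblocks, hN]
  congr
  funext j
  rw [(ht j).2.2.2.2.2, Matrix.mul_assoc]

lemma IsTSVD.isMSVD_bcirc {A : Tensor ι κ p} {U : Tensor ι ι p} {S : Tensor ι κ p}
    {V : Tensor κ κ p} (h : IsTSVD A U S V) :
    IsMSVD (bcirc A) (bcirc U * fourierKron p ι) (fblocks S) (bcirc V * fourierKron p κ) := by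
  obtain ⟨hU, hV, hS, rfl⟩ := h
  have hU' := mul_mem (isTUnitary_iff_mem_unitary.mp hU) fourierKron_mem_unitary
  have hV' := mul_mem (isTUnitary_iff_mem_unitary.mp hV) fourierKron_mem_unitary
  refine ⟨Unitary.star_mul_self_of_mem hU', Unitary.mul_star_self_of_mem hU',
    Unitary.star_mul_self_of_mem hV', Unitary.mul_star_self_of_mem hV', hS.2, ?_⟩
  rw [bcirc_tprod, bcirc_tprod, bcirc_tconjT, bcirc_eq_conj_fblocks S, conjTranspose_mul]
  simp only [Matrix.mul_assoc]

lemma bcirc_fhat {f : ℂ → ℂ} (hf0 : f 0 = 0) (S : Tensor ι κ p) :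
    bcirc (fhat f S) = fourierKron p ι * (fblocks S).map f * (fourierKron p κ)ᴴ := by
  obtain ⟨N, hN⟩ := exists_fblocks_eq_bdiag S
  rw [fhat, ← conjTranspose_fourierKron, hN, bdiag_map hf0]
  exact bcirc_bcircInv (isBlockCirc_fourierKron_mul_bdiag _)

end TSVD

end TProd

/-- the `bcirc` operator intertwines the generalized matrix function and
the generalized tensor function: `f^◇(bcirc A) = bcirc (f^◇(A))` for odd `f`. -/
theorem gmf_bcirc_comm {m n p : ℕ} [NeZero p] (f : ℂ → ℂ) (hf : OddFn f)
    (A : Tensor (Fin m) (Fin n) p) :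
    gmf f (bcirc A) = bcirc (gtf f A) := by
  have hf0 : f 0 = 0 := self_eq_neg.mp (by simpa using hf 0)
  have hex := exists_isTSVD A
  rw [gtf, dif_pos hex, gmf_eq_of_isMSVD hf0 hex.choose_spec.isMSVD_bcirc, bcirc_tprod,
    bcirc_tprod, bcirc_tconjT, bcirc_fhat hf0, conjTranspose_mul]
  simp only [Matrix.mul_assoc]
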